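/- arXiv:2304.05328 — 2 statements merged into one kernel-verified Lean document; each statement's English description precedes it below -/
import Mathlib

section
/- The Galois group of the polynomial X^4 + 8X + 12 over ℚ is isomorphic to the alternating group A_4 on four letters (of order 12). -/
/-!
Let `x₀, …, x₃` be the roots of `f = X⁴ + 8X + 12` and `θ₀ = x₀x₁ + x₂x₃`, `θ₁ = x₀x₂ + x₁x₃`,
`θ₂ = x₀x₃ + x₁x₂`. Then `∏_{i<j} (xⱼ - xᵢ) = (θ₀ - θ₁)(θ₀ - θ₂)(θ₁ - θ₂)`, and the `θᵢ` are the
roots of the resolvent cubic `X³ - 48X - 64`, so the square of this product is the discriminant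
`256·12³ - 27·8⁴ = 576²`. An automorphism multiplies the product by the sign of the permutation it
induces on the roots, but fixes `±576`; hence the Galois group lies in `A₄`.

The resolvent cubic has no rational root, so it is irreducible and `3 ∣ [L : ℚ]`. The quartic has
no rational root either (it is positive), hence no root in a cubic extension, so `[L : ℚ] ≠ 3`.
Finally `A₄` has no subgroup of index `2`: such a subgroup contains every square, and every
3-cycle is the square of a 3-cycle. So the order of the Galois group, a multiple of `3` dividing
`12`, is neither `3` nor `6`; it is `12`, and the group is all of `A₄`.
-/

open Polynomial

theorem Matrix.det_vandermonde_comp_perm {R : Type*} [CommRing R] {n : ℕ} (x : Fin n → R)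
    (π : Equiv.Perm (Fin n)) :
    (vandermonde (x ∘ π)).det = Equiv.Perm.sign π * (vandermonde x).det :=
  det_permute π (vandermonde x)

section AlternatingGroup

open Equiv

variable {α : Type*} [Fintype α] [DecidableEq α]

theorem alternatingGroup_le_of_mul_self_mem {H : Subgroup (Perm α)}
    (h : ∀ g ∈ alternatingGroup α, g * g ∈ H) : alternatingGroup α ≤ H := by
  rw [← Perm.closure_three_cycles_eq_alternating, Subgroup.closure_le]
  intro g hg
  have hg3 : g ^ 3 = 1 := hg.orderOf ▸ pow_orderOf_eq_one g
  have hg' : g = g * g * (g * g) := by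
    calc g = g ^ 3 * g := by rw [hg3, one_mul]
      _ = g * g * (g * g) := by simp only [pow_three, mul_assoc]
  rw [hg']
  exact h _ (mul_mem hg.mem_alternatingGroup hg.mem_alternatingGroup)

theorem relIndex_alternatingGroup_ne_two (H : Subgroup (Perm α)) :
    H.relIndex (alternatingGroup α) ≠ 2 := by
  intro h2
  have hle : alternatingGroup α ≤ H := alternatingGroup_le_of_mul_self_mem fun g hg => by
    simpa [Subgroup.mem_subgroupOf] using Subgroup.mul_self_mem_of_index_two h2 ⟨g, hg⟩
  rw [Subgroup.relIndex_eq_one.2 hle] at h2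
  norm_num at h2

theorem eq_alternatingGroup_fin_four_of_three_dvd_card {H : Subgroup (Perm (Fin 4))}
    (hle : H ≤ alternatingGroup (Fin 4)) (h3 : 3 ∣ Nat.card H) (hne : Nat.card H ≠ 3) :
    H = alternatingGroup (Fin 4) := by
  have hA : Nat.card (alternatingGroup (Fin 4)) = 12 := by
    rw [nat_card_alternatingGroup, Nat.card_fin]; rfl
  have hmul : Nat.card H * H.relIndex (alternatingGroup (Fin 4)) = 12 := by
    have h := Subgroup.card_mul_index (H.subgroupOf (alternatingGroup (Fin 4)))
    rw [Nat.card_congr (Subgroup.subgroupOfEquivOfLe hle).toEquiv, hA] at h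
    exact h
  have h2 := relIndex_alternatingGroup_ne_two H
  have h12 : Nat.card H ≤ 12 := Nat.le_of_dvd (by norm_num) ⟨_, hmul.symm⟩
  refine Subgroup.eq_of_le_of_card_ge hle (hA ▸ ?_)
  interval_cases hc : Nat.card H <;> omega

end AlternatingGroup

theorem exists_isRoot_of_finrank_eq_three {K L : Type*} [Field K] [Field L] [Algebra K L]
    [FiniteDimensional K L] (hL : Module.finrank K L = 3) {f : K[X]} (hf : f.natDegree = 4)
    {x : L} (hx : aeval x f = 0) : ∃ r, f.IsRoot r := by
  have hint : IsIntegral K x := .of_finite K x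
  obtain ⟨q, hq⟩ := minpoly.dvd K x hx
  have hq0 : q ≠ 0 := by rintro rfl; simp [hq] at hf
  have hsum : (minpoly K x).natDegree + q.natDegree = 4 := by
    rw [← natDegree_mul (minpoly.ne_zero hint) hq0, ← hq, hf]
  obtain ⟨g, hgf, hg⟩ : ∃ g, g ∣ f ∧ g.natDegree = 1 := by
    rcases (Nat.dvd_prime Nat.prime_three).1 (hL ▸ minpoly.degree_dvd hint) with h | h
    · exact ⟨_, ⟨q, hq⟩, h⟩
    · exact ⟨q, ⟨minpoly K x, by rw [hq, mul_comm]⟩, by omega⟩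
  obtain ⟨r, hr⟩ :=
    exists_root_of_degree_eq_one ((degree_eq_iff_natDegree_eq_of_pos one_pos).2 hg)
  exact ⟨r, hr.dvd hgf⟩

namespace Polynomial.Gal

variable {K : Type*} [Field K] {p : K[X]} {n : ℕ} (e : p.rootSet p.SplittingField ≃ Fin n)

noncomputable def permFin : p.Gal →* Equiv.Perm (Fin n) :=
  (Equiv.permCongrHom e).toMonoidHom.comp (MulAction.toPermHom p.Gal (p.rootSet p.SplittingField))

noncomputable def enumRoots (i : Fin n) : p.SplittingField := e.symm i

theorem enumRoots_injective : Function.Injective (enumRoots e) :=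
  Subtype.val_injective.comp e.symm.injective

theorem aeval_enumRoots (i : Fin n) : aeval (enumRoots e i) p = 0 :=
  (mem_rootSet.mp (e.symm i).2).2

theorem apply_enumRoots (σ : p.Gal) (i : Fin n) :
    σ (enumRoots e i) = enumRoots e (permFin e σ i) :=
  congrArg Subtype.val (e.symm_apply_apply (σ • e.symm i)).symm

theorem permFin_injective : Function.Injective (permFin e) := by
  intro σ τ h
  refine Gal.ext p fun x hx => ?_
  obtain ⟨i, rfl⟩ : ∃ i, enumRoots e i = x := ⟨e ⟨x, hx⟩, by simp [enumRoots]⟩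
  rw [apply_enumRoots, apply_enumRoots, h]

theorem permFin_mem_alternatingGroup (h2 : (2 : K) ≠ 0) {d : K}
    (hd : (Matrix.vandermonde (enumRoots e)).det ^ 2 = algebraMap K _ d ^ 2) (σ : p.Gal) :
    permFin e σ ∈ alternatingGroup (Fin n) := by
  set δ := (Matrix.vandermonde (enumRoots e)).det
  have hδ : δ ≠ 0 := Matrix.det_vandermonde_ne_zero_iff.2 (enumRoots_injective e)
  have hσδ : σ δ = Equiv.Perm.sign (permFin e σ) * δ := by
    rw [← Matrix.det_vandermonde_comp_perm]
    change (σ : p.SplittingField →+* p.SplittingField) δ = _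
    rw [RingHom.map_det]
    congr 1
    ext i j
    simp [Matrix.vandermonde_apply, apply_enumRoots]
  have hfix : σ δ = δ := by
    have hd' : σ (algebraMap K _ d) = algebraMap K _ d := σ.commutes d
    rcases sq_eq_sq_iff_eq_or_eq_neg.mp hd with h | h <;> simp only [h, map_neg, hd']
  rw [hfix] at hσδ
  rcases Int.units_eq_one_or (Equiv.Perm.sign (permFin e σ)) with h | h
  · exact h
  · rw [h] at hσδ
    have h2δ : (2 : p.SplittingField) * δ = 0 := by push_cast at hσδ; linear_combination hσδ
    have h2' : (2 : p.SplittingField) ≠ 0 := by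
      rw [← map_ofNat (algebraMap K p.SplittingField) 2]
      exact (map_ne_zero_iff _ (algebraMap K _).injective).2 h2
    exact absurd h2δ (mul_ne_zero h2' hδ)

end Polynomial.Gal

section RootsOfQuarticTrinomial

variable {R : Type*} [CommRing R] [IsDomain R] {a b : R}

theorem quartic_dividedDiff₁_eq_zero {u w : R} (huw : u ≠ w) (hu : u ^ 4 + a * u + b = 0)
    (hw : w ^ 4 + a * w + b = 0) : u ^ 3 + u ^ 2 * w + u * w ^ 2 + w ^ 3 + a = 0 :=
  mul_left_cancel₀ (sub_ne_zero.2 huw) (by linear_combination hu - hw)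

theorem quartic_dividedDiff₂_eq_zero {u v w : R} (huv : u ≠ v) (huw : u ≠ w) (hvw : v ≠ w)
    (hu : u ^ 4 + a * u + b = 0) (hv : v ^ 4 + a * v + b = 0) (hw : w ^ 4 + a * w + b = 0) :
    u ^ 2 + u * v + v ^ 2 + u * w + v * w + w ^ 2 = 0 :=
  mul_left_cancel₀ (sub_ne_zero.2 huv) (by
    linear_combination
      quartic_dividedDiff₁_eq_zero huw hu hw - quartic_dividedDiff₁_eq_zero hvw hv hw)

theorem quartic_vieta {x : Fin 4 → R} (hx : Function.Injective x)
    (hroot : ∀ i, x i ^ 4 + a * x i + b = 0) :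
    x 0 + x 1 + x 2 + x 3 = 0 ∧
    x 0 * x 1 + x 0 * x 2 + x 0 * x 3 + x 1 * x 2 + x 1 * x 3 + x 2 * x 3 = 0 ∧
    x 0 * x 1 * x 2 + x 0 * x 1 * x 3 + x 0 * x 2 * x 3 + x 1 * x 2 * x 3 = -a ∧
    x 0 * x 1 * x 2 * x 3 = b := by
  have hne {i j : Fin 4} (h : i ≠ j) : x i ≠ x j := hx.ne h
  have g₀ := quartic_dividedDiff₂_eq_zero (hne (by decide : (0 : Fin 4) ≠ 2))
    (hne (by decide : (0 : Fin 4) ≠ 3)) (hne (by decide : (2 : Fin 4) ≠ 3))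
    (hroot 0) (hroot 2) (hroot 3)
  have g₁ := quartic_dividedDiff₂_eq_zero (hne (by decide : (1 : Fin 4) ≠ 2))
    (hne (by decide : (1 : Fin 4) ≠ 3)) (hne (by decide : (2 : Fin 4) ≠ 3))
    (hroot 1) (hroot 2) (hroot 3)
  have e₁ : x 0 + x 1 + x 2 + x 3 = 0 :=
    mul_left_cancel₀ (sub_ne_zero.2 (hne (by decide : (0 : Fin 4) ≠ 1)))
      (by linear_combination g₀ - g₁)
  have e₂ : x 0 * x 1 + x 0 * x 2 + x 0 * x 3 + x 1 * x 2 + x 1 * x 3 + x 2 * x 3 = 0 := by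
    linear_combination (x 1 + x 2 + x 3) * e₁ - g₁
  -- `f - ∏ⱼ (X - xⱼ)` is linear once `e₁ = e₂ = 0`, and it vanishes at every `xᵢ`.
  have lin (i : Fin 4) :
      (a + (x 0 * x 1 * x 2 + x 0 * x 1 * x 3 + x 0 * x 2 * x 3 + x 1 * x 2 * x 3)) * x i
        + (b - x 0 * x 1 * x 2 * x 3) = 0 := by
    have hQ : (x i - x 0) * (x i - x 1) * (x i - x 2) * (x i - x 3) = 0 := by
      fin_cases i <;> simp
    linear_combination hroot i - x i ^ 3 * e₁ + x i ^ 2 * e₂ - hQ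
  have h01 : (a + (x 0 * x 1 * x 2 + x 0 * x 1 * x 3 + x 0 * x 2 * x 3 + x 1 * x 2 * x 3))
      * (x 0 - x 1) = 0 := by
    linear_combination lin 0 - lin 1
  have e₃ : x 0 * x 1 * x 2 + x 0 * x 1 * x 3 + x 0 * x 2 * x 3 + x 1 * x 2 * x 3 = -a := by
    linear_combination
      (mul_eq_zero.1 h01).resolve_right (sub_ne_zero.2 (hne (by decide : (0 : Fin 4) ≠ 1)))
  exact ⟨e₁, e₂, e₃, by linear_combination x 0 * e₃ - lin 0⟩

theorem resolvent_vieta {x : Fin 4 → R} (hx : Function.Injective x)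
    (hroot : ∀ i, x i ^ 4 + a * x i + b = 0) :
    (x 0 * x 1 + x 2 * x 3) + (x 0 * x 2 + x 1 * x 3) + (x 0 * x 3 + x 1 * x 2) = 0 ∧
    (x 0 * x 1 + x 2 * x 3) * (x 0 * x 2 + x 1 * x 3) +
      (x 0 * x 1 + x 2 * x 3) * (x 0 * x 3 + x 1 * x 2) +
      (x 0 * x 2 + x 1 * x 3) * (x 0 * x 3 + x 1 * x 2) = -4 * b ∧
    (x 0 * x 1 + x 2 * x 3) * (x 0 * x 2 + x 1 * x 3) * (x 0 * x 3 + x 1 * x 2) = a ^ 2 := by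
  obtain ⟨e₁, e₂, e₃, e₄⟩ := quartic_vieta hx hroot
  refine ⟨by linear_combination e₂, ?_, ?_⟩
  · linear_combination
      (x 0 * x 1 * x 2 + x 0 * x 1 * x 3 + x 0 * x 2 * x 3 + x 1 * x 2 * x 3) * e₁ - 4 * e₄
  · linear_combination (x 0 + x 1 + x 2 + x 3) * (x 0 * x 1 * x 2 * x 3) * e₁
      - 4 * (x 0 * x 1 * x 2 * x 3) * e₂
      + (x 0 * x 1 * x 2 + x 0 * x 1 * x 3 + x 0 * x 2 * x 3 + x 1 * x 2 * x 3 - a) * e₃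

theorem resolvent_root_of_quartic_roots {x : Fin 4 → R} (hx : Function.Injective x)
    (hroot : ∀ i, x i ^ 4 + a * x i + b = 0) :
    (x 0 * x 1 + x 2 * x 3) ^ 3 - 4 * b * (x 0 * x 1 + x 2 * x 3) - a ^ 2 = 0 := by
  obtain ⟨s₁, s₂, s₃⟩ := resolvent_vieta hx hroot
  linear_combination (x 0 * x 1 + x 2 * x 3) ^ 2 * s₁ - (x 0 * x 1 + x 2 * x 3) * s₂ + s₃

end RootsOfQuarticTrinomial

section Discriminant

variable {R : Type*} [CommRing R]

theorem sq_discr_cubic_of_sum_eq_zero {t₀ t₁ t₂ : R} (h : t₀ + t₁ + t₂ = 0) :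
    ((t₀ - t₁) * (t₀ - t₂) * (t₁ - t₂)) ^ 2 =
      -4 * (t₀ * t₁ + t₀ * t₂ + t₁ * t₂) ^ 3 - 27 * (t₀ * t₁ * t₂) ^ 2 := by
  obtain rfl : t₂ = -t₀ - t₁ := by linear_combination h
  ring

theorem det_vandermonde_fin_four (x : Fin 4 → R) :
    (Matrix.vandermonde x).det = ((x 0 * x 1 + x 2 * x 3) - (x 0 * x 2 + x 1 * x 3)) *
      ((x 0 * x 1 + x 2 * x 3) - (x 0 * x 3 + x 1 * x 2)) *
      ((x 0 * x 2 + x 1 * x 3) - (x 0 * x 3 + x 1 * x 2)) := by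
  simp only [Matrix.det_vandermonde, Fin.prod_univ_succ, Fin.isValue, Fin.Ioi_zero_eq_map,
    Nat.reduceAdd, Finset.prod_map, Fin.coe_succEmb, Fin.succ_zero_eq_one, Fin.succ_one_eq_two,
    Finset.univ_unique, Fin.default_eq_zero, Finset.prod_singleton, Fin.reduceSucc,
    Fin.prod_Ioi_succ, Finset.map_singleton, isMax_iff_eq_top, Fin.zero_eq_top,
    IsMax.finsetIoi_eq, Finset.prod_empty, mul_one]
  ring

theorem sq_det_vandermonde_of_quartic_roots [IsDomain R] {a b : R} {x : Fin 4 → R}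
    (hx : Function.Injective x) (hroot : ∀ i, x i ^ 4 + a * x i + b = 0) :
    (Matrix.vandermonde x).det ^ 2 = 256 * b ^ 3 - 27 * a ^ 4 := by
  obtain ⟨s₁, s₂, s₃⟩ := resolvent_vieta hx hroot
  rw [det_vandermonde_fin_four, sq_discr_cubic_of_sum_eq_zero s₁, s₂, s₃]
  ring

end Discriminant

section QuarticTrinomial

variable {K : Type*} [Field K]

noncomputable def quarticTrinomial (a b : K) : K[X] := X ^ 4 + C a * X + C b

noncomputable def cubicResolvent (a b : K) : K[X] := X ^ 3 - C (4 * b) * X - C (a ^ 2)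

variable {a b : K}

theorem natDegree_quarticTrinomial : (quarticTrinomial a b).natDegree = 4 := by
  unfold quarticTrinomial; compute_degree!

theorem natDegree_cubicResolvent : (cubicResolvent a b).natDegree = 3 := by
  unfold cubicResolvent; compute_degree!

theorem monic_cubicResolvent : (cubicResolvent a b).Monic := by
  unfold cubicResolvent; monicity!

theorem separable_quarticTrinomial (h : 256 * b ^ 3 - 27 * a ^ 4 ≠ 0) :
    (quarticTrinomial a b).Separable := by
  have hf' : derivative (quarticTrinomial a b) = C 4 * X ^ 3 + C a := by
    simp only [quarticTrinomial, derivative_add, derivative_X_pow, derivative_C_mul_X,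
      derivative_C]
    norm_num
  -- `r = 4f - Xf'` is linear, and eliminating `X` between `r` and `f'` leaves the discriminant.
  set r : K[X] := 3 * C a * X + 4 * C b
  set g : K[X] := 4 * r ^ 2 - 48 * C b * r + 192 * C b ^ 2
  have key : 4 * g * quarticTrinomial a b
      - (X * g + 27 * C a ^ 3) * derivative (quarticTrinomial a b)
      = C (256 * b ^ 3 - 27 * a ^ 4) := by
    rw [hf']
    simp only [quarticTrinomial, r, g, map_sub, map_mul, map_pow, map_ofNat]
    ring
  have hunit : C (256 * b ^ 3 - 27 * a ^ 4)⁻¹ * C (256 * b ^ 3 - 27 * a ^ 4) = 1 := by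
    rw [← C_mul, inv_mul_cancel₀ h, C_1]
  refine ⟨C (256 * b ^ 3 - 27 * a ^ 4)⁻¹ * (4 * g),
    -(C (256 * b ^ 3 - 27 * a ^ 4)⁻¹ * (X * g + 27 * C a ^ 3)), ?_⟩
  linear_combination C (256 * b ^ 3 - 27 * a ^ 4)⁻¹ * key + hunit

variable {L : Type*} [Field L] [Algebra K L]

theorem aeval_quarticTrinomial (x : L) :
    aeval x (quarticTrinomial a b) = x ^ 4 + algebraMap K L a * x + algebraMap K L b := by
  simp only [quarticTrinomial, map_add, map_mul, aeval_X_pow, aeval_X, aeval_C]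

theorem aeval_cubicResolvent (x : L) :
    aeval x (cubicResolvent a b) = x ^ 3 - 4 * algebraMap K L b * x - algebraMap K L a ^ 2 := by
  simp only [cubicResolvent, map_sub, map_mul, map_pow, map_ofNat, aeval_X, aeval_C]

theorem three_dvd_finrank_of_quartic_roots [FiniteDimensional K L]
    (hres : Irreducible (cubicResolvent a b)) {x : Fin 4 → L} (hx : Function.Injective x)
    (hroot : ∀ i, x i ^ 4 + algebraMap K L a * x i + algebraMap K L b = 0) :
    3 ∣ Module.finrank K L := by
  have hθ : aeval (x 0 * x 1 + x 2 * x 3) (cubicResolvent a b) = 0 := by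
    rw [aeval_cubicResolvent]; exact resolvent_root_of_quartic_roots hx hroot
  have hmin := minpoly.eq_of_irreducible_of_monic hres hθ monic_cubicResolvent
  exact natDegree_cubicResolvent (a := a) ▸ hmin ▸ minpoly.degree_dvd (.of_finite K _)

theorem nonempty_gal_quarticTrinomial_mulEquiv_alternatingGroup (h2 : (2 : K) ≠ 0) {d : K}
    (hd : d ≠ 0) (hdisc : 256 * b ^ 3 - 27 * a ^ 4 = d ^ 2)
    (hroot : ∀ r : K, r ^ 4 + a * r + b ≠ 0) (hres : Irreducible (cubicResolvent a b)) :
    Nonempty ((quarticTrinomial a b).Gal ≃* alternatingGroup (Fin 4)) := by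
  set p := quarticTrinomial a b
  have hsep : p.Separable := separable_quarticTrinomial (hdisc ▸ pow_ne_zero 2 hd)
  obtain e : p.rootSet p.SplittingField ≃ Fin 4 := Fintype.equivFinOfCardEq <| by
    rw [card_rootSet_eq_natDegree hsep (SplittingField.splits p), natDegree_quarticTrinomial]
  have hx (i : Fin 4) : Gal.enumRoots e i ^ 4 + algebraMap K _ a * Gal.enumRoots e i
      + algebraMap K _ b = 0 := by
    rw [← aeval_quarticTrinomial]; exact Gal.aeval_enumRoots e i
  have hle : (Gal.permFin e).range ≤ alternatingGroup (Fin 4) := by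
    rintro _ ⟨σ, rfl⟩
    refine Gal.permFin_mem_alternatingGroup e h2 (d := d) ?_ σ
    rw [sq_det_vandermonde_of_quartic_roots (Gal.enumRoots_injective e) hx,
      ← map_pow (algebraMap K _) d, ← hdisc]
    simp only [map_sub, map_mul, map_pow, map_ofNat]
  have hcard : Nat.card (Gal.permFin e).range = Module.finrank K p.SplittingField := by
    rw [← Gal.card_of_separable hsep]
    exact Nat.card_congr (MonoidHom.ofInjective (Gal.permFin_injective e)).toEquiv.symm
  have h3 := three_dvd_finrank_of_quartic_roots hres (Gal.enumRoots_injective e) hx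
  have hne3 : Module.finrank K p.SplittingField ≠ 3 := fun h => by
    obtain ⟨r, hr⟩ := exists_isRoot_of_finrank_eq_three h natDegree_quarticTrinomial
      (Gal.aeval_enumRoots e 0)
    exact hroot r (by simpa [p, quarticTrinomial] using hr)
  exact ⟨(MonoidHom.ofInjective (Gal.permFin_injective e)).trans (MulEquiv.subgroupCongr
    (eq_alternatingGroup_fin_four_of_three_dvd_card hle (hcard ▸ h3) (hcard ▸ hne3)))⟩

end QuarticTrinomial

theorem pow_four_add_eight_mul_add_twelve_pos {R : Type*} [CommRing R] [LinearOrder R]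
    [IsStrictOrderedRing R] (r : R) : 0 < r ^ 4 + 8 * r + 12 := by
  nlinarith [sq_nonneg (r ^ 2 - 1), sq_nonneg (r + 2)]

theorem irreducible_cubicResolvent_eight_twelve : Irreducible (cubicResolvent (8 : ℚ) 12) := by
  rw [irreducible_iff_roots_eq_zero_of_degree_le_three
      (by rw [natDegree_cubicResolvent]; omega) (by rw [natDegree_cubicResolvent]),
    Multiset.eq_zero_iff_forall_notMem]
  intro r hr
  have h := (mem_roots monic_cubicResolvent.ne_zero).mp hr
  simp only [IsRoot.def, cubicResolvent, eval_sub, eval_mul, eval_pow, eval_X, eval_C] at h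
  norm_num at h
  obtain ⟨n, rfl, -⟩ := exists_integer_of_is_root_of_monic
    (p := (X ^ 3 - C 48 * X - C 64 : ℤ[X])) (by monicity!) (r := r)
    (by simpa only [map_sub, map_mul, map_pow, aeval_X, aeval_C, map_ofNat] using h)
  have hn : n ^ 3 - 48 * n - 64 = 0 := by
    rw [algebraMap_int_eq, eq_intCast] at h; exact_mod_cast h
  have hdvd : n ∣ 64 := ⟨n ^ 2 - 48, by linear_combination -hn⟩
  have hle : n ≤ 64 := Int.le_of_dvd (by norm_num) hdvd
  have hge : -64 ≤ n := neg_le.1 (Int.le_of_dvd (by norm_num) (neg_dvd.2 hdvd))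
  interval_cases n <;> norm_num at hn

/-- The Galois group of `X^4 + 8X + 12` over `ℚ` is isomorphic to the alternating
group `A₄` on four letters. -/
theorem stmt_2 :
    Nonempty ((X ^ 4 + C (8 : ℚ) * X + C (12 : ℚ)).Gal ≃* alternatingGroup (Fin 4)) :=
  nonempty_gal_quarticTrinomial_mulEquiv_alternatingGroup (a := 8) (b := 12) (d := 576)
    two_ne_zero (by norm_num) (by norm_num)
    (fun r => (pow_four_add_eight_mul_add_twelve_pos r).ne')
    irreducible_cubicResolvent_eight_twelve
end

section
/- Let a, b ∈ ℚ be such that the polynomial P(X) = X^4 + aX^2 + b is irreducible over ℚ, and denote its roots in a splitting field L by ±α and ±β. Then the Galois group of P over ℚ is isomorphic to ℤ/2ℤ × ℤ/2ℤ if and only if αβ ∈ ℚ; equivalently, if and only if b is a square in ℚ. -/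
open Polynomial IntermediateField Module

instance : IsKleinFour (Multiplicative (ZMod 2) × Multiplicative (ZMod 2)) where
  card_four := by simp [Nat.card_prod]
  exponent_two := by simp [Monoid.exponent_prod]

private lemma algEquiv_eq_one_of_fix_gen {F L : Type*} [Field F] [Field L] [Algebra F L]
    (σ : L ≃ₐ[F] L) (x : L) (hint : IsIntegral F x)
    (hx : F⟮x⟯ = (⊤ : IntermediateField F L)) (h : σ x = x) : σ = 1 := by
  have hadj : Algebra.adjoin F ({x} : Set L) = ⊤ := by
    rw [← IntermediateField.adjoin_simple_toSubalgebra_of_isAlgebraic hint.isAlgebraic, hx,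
      IntermediateField.top_toSubalgebra]
  have hle : Algebra.adjoin F ({x} : Set L) ≤ AlgHom.equalizer σ.toAlgHom (AlgHom.id F L) :=
    Algebra.adjoin_le (by simpa using h)
  ext y
  have hy : y ∈ Algebra.adjoin F ({x} : Set L) := hadj ▸ Algebra.mem_top
  exact hle hy

private lemma gal_one_apply {F : Type*} [Field F] (p : F[X]) (x : p.SplittingField) :
    (1 : p.Gal) x = x := rfl

private lemma stmt_4_aux (a b : ℚ) (P : ℚ[X]) (hP : P = X ^ 4 + C a * X ^ 2 + C b)
    (hirr : Irreducible P)
    (α β : P.SplittingField)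
    (hroots : (P.map (algebraMap ℚ P.SplittingField)).roots = {α, -α, β, -β}) :
    (Nonempty (P.Gal ≃* Multiplicative (ZMod 2) × Multiplicative (ZMod 2)) ↔
      α * β ∈ (algebraMap ℚ P.SplittingField).range) ∧
    (Nonempty (P.Gal ≃* Multiplicative (ZMod 2) × Multiplicative (ZMod 2)) ↔
      IsSquare b) := by
  have hPmonic : P.Monic := by rw [hP]; monicity!
  have hPdeg : P.natDegree = 4 := by rw [hP]; compute_degree!
  have hsep : P.Separable := hirr.separable
  haveI : IsGalois ℚ P.SplittingField := by
    haveI : IsSplittingField ℚ P.SplittingField P := Polynomial.IsSplittingField.splittingField P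
    exact IsGalois.of_separable_splitting_field hsep
  -- distinctness of roots
  have hnodup : ((P.map (algebraMap ℚ P.SplittingField)).roots).Nodup := nodup_roots hsep.map
  rw [hroots] at hnodup
  simp only [Multiset.insert_eq_cons, Multiset.nodup_cons, Multiset.mem_cons,
    Multiset.mem_singleton, Multiset.nodup_singleton, and_true, not_or] at hnodup
  obtain ⟨⟨hαα, hαβ, hαβ'⟩, ⟨hβα', hαβ''⟩, hββ⟩ := hnodup
  have hβα'2 : β ≠ -α := fun h => hβα' h.symm
  have hα0 : α ≠ 0 := fun h => hαα (by rw [h, neg_zero])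
  have hβ0 : β ≠ 0 := fun h => hββ (by rw [h, neg_zero])
  -- root equations
  have root_iff : ∀ x : P.SplittingField, aeval x P = 0 → (x = α ∨ x = -α ∨ x = β ∨ x = -β) := by
    intro x hx
    have hm : x ∈ (P.map (algebraMap ℚ P.SplittingField)).roots := by
      rw [mem_roots']
      exact ⟨(hPmonic.map _).ne_zero, by rwa [IsRoot, eval_map, ← aeval_def]⟩
    rw [hroots] at hm
    simpa using hm
  have hαe : aeval α P = 0 := by
    have hm : α ∈ (P.map (algebraMap ℚ P.SplittingField)).roots := by rw [hroots]; simp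
    have := isRoot_of_mem_roots hm
    rwa [IsRoot, eval_map, ← aeval_def] at this
  have hβe : aeval β P = 0 := by
    have hm : β ∈ (P.map (algebraMap ℚ P.SplittingField)).roots := by
      rw [hroots, Multiset.insert_eq_cons]
      exact Multiset.mem_cons_of_mem (Multiset.mem_cons_of_mem (by simp))
    have := isRoot_of_mem_roots hm
    rwa [IsRoot, eval_map, ← aeval_def] at this
  have eα : α ^ 4 + algebraMap ℚ P.SplittingField a * α ^ 2 + algebraMap ℚ P.SplittingField b = 0 := by
    simpa [hP, map_add, map_mul, map_pow] using hαe
  have eβ : β ^ 4 + algebraMap ℚ P.SplittingField a * β ^ 2 + algebraMap ℚ P.SplittingField b = 0 := by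
    simpa [hP, map_add, map_mul, map_pow] using hβe
  -- Vieta-type identities
  have hne2 : α ^ 2 ≠ β ^ 2 := by
    intro h
    rcases mul_eq_zero.mp (show (α - β) * (α + β) = 0 by linear_combination h) with h' | h'
    · exact hαβ (sub_eq_zero.mp h')
    · exact hαβ' (eq_neg_of_add_eq_zero_left h')
  have hsum : α ^ 2 + β ^ 2 = -(algebraMap ℚ P.SplittingField a) := by
    have hfac : (α ^ 2 - β ^ 2) * (α ^ 2 + β ^ 2 + algebraMap ℚ P.SplittingField a) = 0 := by
      linear_combination eα - eβ
    rcases mul_eq_zero.mp hfac with h' | h'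
    · exact absurd (sub_eq_zero.mp h') hne2
    · linear_combination h'
  have hprod : α ^ 2 * β ^ 2 = algebraMap ℚ P.SplittingField b := by
    linear_combination α ^ 2 * hsum - eα
  -- minpoly and degrees
  have hminα : minpoly ℚ α = P := (minpoly.eq_of_irreducible_of_monic hirr hαe hPmonic).symm
  have hminβ : minpoly ℚ β = P := (minpoly.eq_of_irreducible_of_monic hirr hβe hPmonic).symm
  have aeval_apply : ∀ (σ : P.Gal) (x : P.SplittingField), aeval x P = 0 → aeval (σ x) P = 0 := by
    intro σ x hx
    have h0 := Polynomial.aeval_algHom_apply (AlgHomClass.toAlgHom σ : P.SplittingField →ₐ[ℚ] P.SplittingField) x P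
    change aeval (σ x) P = σ (aeval x P) at h0
    rw [h0, hx, map_zero]
  -- second iff in terms of the first
  have hiff2 : (α * β ∈ (algebraMap ℚ P.SplittingField).range) ↔ IsSquare b := by
    constructor
    · rintro ⟨c, hc⟩
      refine ⟨c, ?_⟩
      have h : algebraMap ℚ P.SplittingField (c * c) = algebraMap ℚ P.SplittingField b := by
        rw [map_mul, hc]; linear_combination hprod
      exact ((algebraMap ℚ P.SplittingField).injective h).symm
    · rintro ⟨c, hc⟩
      have hbc : algebraMap ℚ P.SplittingField b = algebraMap ℚ P.SplittingField c * algebraMap ℚ P.SplittingField c := by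
        rw [← map_mul, ← hc]
      have h2 : (α * β - algebraMap ℚ P.SplittingField c) * (α * β + algebraMap ℚ P.SplittingField c) = 0 := by
        linear_combination hprod + hbc
      rcases mul_eq_zero.mp h2 with h | h
      · exact ⟨c, (sub_eq_zero.mp h).symm⟩
      · exact ⟨-c, by rw [map_neg]; exact (eq_neg_of_add_eq_zero_left h).symm⟩
  -- main equivalence
  have hmain : Nonempty (P.Gal ≃* Multiplicative (ZMod 2) × Multiplicative (ZMod 2)) ↔
      α * β ∈ (algebraMap ℚ P.SplittingField).range := by
    constructor
    · rintro ⟨e⟩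
      have hsq : ∀ σ : P.Gal, σ * σ = 1 := by
        have hx : ∀ x : Multiplicative (ZMod 2) × Multiplicative (ZMod 2), x * x = 1 := by
          decide
        intro σ
        apply e.injective
        rw [map_mul, map_one]
        exact hx _
      have hcard : Fintype.card P.Gal = 4 := by
        rw [Fintype.card_congr e.toEquiv]; rfl
      have hfinL : finrank ℚ P.SplittingField = 4 := by
        rw [← Polynomial.Gal.card_of_separable hsep, Nat.card_eq_fintype_card]; exact hcard
      have htopα : ℚ⟮α⟯ = ⊤ :=
        (Field.primitive_element_iff_minpoly_natDegree_eq ℚ α).mpr (by rw [hminα, hPdeg, hfinL])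
      have htopβ : ℚ⟮β⟯ = ⊤ :=
        (Field.primitive_element_iff_minpoly_natDegree_eq ℚ β).mpr (by rw [hminβ, hPdeg, hfinL])
      have hgenα : ∀ σ : P.Gal, σ α = α → σ = 1 := fun σ h =>
        algEquiv_eq_one_of_fix_gen σ α (IsIntegral.of_finite ℚ α) htopα h
      have hgenβ : ∀ σ : P.Gal, σ β = β → σ = 1 := fun σ h =>
        algEquiv_eq_one_of_fix_gen σ β (IsIntegral.of_finite ℚ β) htopβ h
      have hfix : ∀ σ : P.Gal, σ (α * β) = α * β := by
        intro σ
        have hσσ : ∀ x, σ (σ x) = x := fun x => by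
          rw [show σ (σ x) = (σ * σ) x from rfl, hsq σ, gal_one_apply]
        have hσα : aeval (σ α) P = 0 := aeval_apply σ α hαe
        have hσβ : aeval (σ β) P = 0 := aeval_apply σ β hβe
        rcases root_iff (σ α) hσα with h | h | h | h
        · rw [hgenα σ h, gal_one_apply]
        · rcases root_iff (σ β) hσβ with h' | h' | h' | h'
          · exact absurd (by rw [← hσσ β, h', h]) hβα'2
          · exact absurd (by rw [← hσσ β, h', map_neg, h, neg_neg] : β = α) (fun hh => hαβ hh.symm)
          · have h1 := hgenβ σ h'
            rw [h1, gal_one_apply] at h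
            exact absurd h hαα
          · rw [map_mul, h, h']; ring
        · have hb : σ β = α := by rw [← h, hσσ]
          rw [map_mul, h, hb]; ring
        · have hb : σ β = -α := by
            have h2 := hσσ α
            rw [h, map_neg] at h2
            exact neg_eq_iff_eq_neg.mp h2
          rw [map_mul, h, hb]; ring
      have hmem : α * β ∈ (⊥ : IntermediateField ℚ P.SplittingField) := by
        have h2 : IntermediateField.fixedField
            (⊤ : Subgroup (P.SplittingField ≃ₐ[ℚ] P.SplittingField)) = ⊥ := by
          rw [← IntermediateField.fixingSubgroup_bot,
            IsGalois.fixedField_fixingSubgroup ⊥]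
        rw [← h2]
        exact fun g => hfix g.1
      rcases IntermediateField.mem_bot.mp hmem with ⟨c, hc⟩
      exact ⟨c, hc⟩
    · rintro ⟨c, hc⟩
      have hβeq : β = algebraMap ℚ P.SplittingField c * α⁻¹ := by
        field_simp
        linear_combination -hc
      have hβmem : β ∈ ℚ⟮α⟯ := by
        rw [hβeq]
        exact mul_mem (_root_.algebraMap_mem _ c) (inv_mem (mem_adjoin_simple_self ℚ α))
      have htop : ℚ⟮α⟯ = ⊤ := by
        rw [eq_top_iff]
        intro x _
        have hx : x ∈ Algebra.adjoin ℚ (P.rootSet P.SplittingField) := by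
          exact (SetLike.ext_iff.mp (Polynomial.SplittingField.adjoin_rootSet P) x).mpr Algebra.mem_top
        refine Algebra.adjoin_le (S := ℚ⟮α⟯.toSubalgebra) ?_ hx
        intro y hy
        have hy' := Polynomial.mem_rootSet'.mp hy
        rcases root_iff y hy'.2 with h | h | h | h
        · rw [h]; exact mem_adjoin_simple_self ℚ α
        · rw [h]; exact neg_mem (mem_adjoin_simple_self ℚ α)
        · rw [h]; exact hβmem
        · rw [h]; exact neg_mem hβmem
      have hgen : ∀ σ : P.Gal, σ α = α → σ = 1 := fun σ h =>
        algEquiv_eq_one_of_fix_gen σ α (IsIntegral.of_finite ℚ α) htop h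
      have hsq : ∀ σ : P.Gal, σ * σ = 1 := by
        intro σ
        have hσα : aeval (σ α) P = 0 := aeval_apply σ α hαe
        have hfixc : σ α * σ β = α * β := by
          rw [← map_mul, ← hc, AlgHomClass.commutes, hc]; exact hc
        rcases root_iff (σ α) hσα with h | h | h | h
        · rw [hgen σ h, mul_one]
        · apply hgen
          show σ (σ α) = α
          rw [h, map_neg, h, neg_neg]
        · have hb : σ β = α := by
            rw [h] at hfixc
            have h2 : β * σ β = β * α := by linear_combination hfixc
            exact mul_left_cancel₀ hβ0 h2
          apply hgen
          show σ (σ α) = α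
          rw [h, hb]
        · have hb : σ β = -α := by
            rw [h] at hfixc
            have h2 : β * σ β = β * -α := by linear_combination -hfixc
            exact mul_left_cancel₀ hβ0 h2
          apply hgen
          show σ (σ α) = α
          rw [h, map_neg, hb, neg_neg]
      haveI hnt : Nontrivial P.Gal := by
        apply Fintype.one_lt_card_iff_nontrivial.mp
        rw [← Nat.card_eq_fintype_card, Polynomial.Gal.card_of_separable hsep]
        have h1 := Field.primitive_element_iff_minpoly_natDegree_eq ℚ α
        rw [hminα, hPdeg] at h1
        rw [← h1.mp htop]
        norm_num
      haveI hK4 : IsKleinFour P.Gal := by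
        constructor
        · rw [Polynomial.Gal.card_of_separable hsep]
          have h1 := Field.primitive_element_iff_minpoly_natDegree_eq ℚ α
          rw [hminα, hPdeg] at h1
          exact (h1.mp htop).symm
        · have hdvd : Monoid.exponent P.Gal ∣ 2 :=
            Monoid.exponent_dvd_of_forall_pow_eq_one (fun g => by rw [pow_two]; exact hsq g)
          rcases (Nat.dvd_prime Nat.prime_two).mp hdvd with h | h
          · exfalso
            obtain ⟨g, hg⟩ := exists_ne (1 : P.Gal)
            have hg1 := Monoid.pow_exponent_eq_one g
            rw [h, pow_one] at hg1
            exact hg hg1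
          · exact h
      exact IsKleinFour.nonempty_mulEquiv
  exact ⟨hmain, hmain.trans hiff2⟩

/-- Let `P = X^4 + aX^2 + b` be irreducible over `ℚ`, with roots `±α`, `±β` in its
splitting field. Then `Gal(P) ≅ ℤ/2ℤ × ℤ/2ℤ` if and only if `αβ ∈ ℚ`, and equivalently
if and only if `b` is a square in `ℚ`. -/
theorem stmt_4 (a b : ℚ)
    (hirr : Irreducible (X ^ 4 + C a * X ^ 2 + C b))
    (α β : (X ^ 4 + C a * X ^ 2 + C b).SplittingField)
    (hroots : ((X ^ 4 + C a * X ^ 2 + C b).map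
        (algebraMap ℚ (X ^ 4 + C a * X ^ 2 + C b).SplittingField)).roots
      = {α, -α, β, -β}) :
    (Nonempty ((X ^ 4 + C a * X ^ 2 + C b).Gal ≃*
        Multiplicative (ZMod 2) × Multiplicative (ZMod 2)) ↔
      α * β ∈ (algebraMap ℚ (X ^ 4 + C a * X ^ 2 + C b).SplittingField).range) ∧
    (Nonempty ((X ^ 4 + C a * X ^ 2 + C b).Gal ≃*
        Multiplicative (ZMod 2) × Multiplicative (ZMod 2)) ↔
      IsSquare b) :=
  stmt_4_aux a b _ rfl hirr α β hroots
end
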